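/- For every integer k ≥ 1, ζ(k+3) = (1/((k+1)(k+2))) ∑_{n=k}^{∞} (-1)^{n-k} s(n,k) (H_n^2 + H_n^{(2)}) / (n! · n), where ζ is the Riemann zeta function. -/

import Mathlib

open scoped BigOperators

noncomputable def stirlingS1 (n k : ℕ) : ℝ :=
  (∏ i ∈ Finset.range n, (Polynomial.X - Polynomial.C (i : ℝ))).coeff k

noncomputable def H (n : ℕ) : ℝ := ∑ j ∈ Finset.range n, 1 / (j + 1 : ℝ)

noncomputable def Hgen (p n : ℕ) : ℝ := ∑ j ∈ Finset.range n, 1 / ((j + 1 : ℝ) ^ p)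

/-!
Substituting `x = 1 - e^{-v}` in the exponential generating function
`∑ₙ |s(n,k)| xⁿ / n! = (-log (1 - x))ᵏ / k!` gives `vᵏ / k!`, while expanding `(1 - e^{-v})^{n-1}`
binomially and evaluating the alternating binomial sums `∑ᵢ (-1)ⁱ C(n-1,i) / (i+1)³` gives
`∫₀^∞ v² e^{-v} (1 - e^{-v})^{n-1} dv = (H_n² + H_n^{(2)}) / n`.
Weighting by `|s(n,k)| / n!` and exchanging sum and integral (all terms are nonnegative), the series
becomes `(1 / k!) ∫₀^∞ v^{k+2} / (e^v - 1) dv = (k+2)! ζ(k+3) / k!`.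
-/

open Nat hiding log
open Finset Real Set MeasureTheory

theorem stirlingS1_zero_left (k : ℕ) : stirlingS1 0 k = if k = 0 then 1 else 0 := by
  simp [stirlingS1, Polynomial.coeff_one]

theorem stirlingS1_succ_zero (n : ℕ) : stirlingS1 (n + 1) 0 = 0 := by
  simp [stirlingS1, Polynomial.coeff_zero_eq_eval_zero, Polynomial.eval_prod,
    prod_range_succ']

theorem stirlingS1_succ_succ (n k : ℕ) :
    stirlingS1 (n + 1) (k + 1) = stirlingS1 n k - n * stirlingS1 n (k + 1) := by
  simp only [stirlingS1, prod_range_succ, mul_sub, Polynomial.coeff_sub, Polynomial.coeff_mul_X,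
    Polynomial.coeff_mul_C]
  ring

theorem stirlingS1_eq_neg_one_pow_mul_stirlingFirst (n k : ℕ) :
    stirlingS1 n k = (-1) ^ (n + k) * stirlingFirst n k := by
  induction n generalizing k with
  | zero => cases k <;> simp [stirlingS1_zero_left]
  | succ n ih =>
    cases k with
    | zero => simp [stirlingS1_succ_zero]
    | succ k =>
      rw [stirlingS1_succ_succ, ih, ih, stirlingFirst_succ_succ]
      push_cast
      ring

theorem stirlingFirst_le_factorial (n k : ℕ) : stirlingFirst n k ≤ n ! := by
  induction n generalizing k with
  | zero => cases k <;> simp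
  | succ n ih =>
    cases k with
    | zero => simp
    | succ k =>
      rw [stirlingFirst_succ_succ, factorial_succ, add_mul, one_mul]
      gcongr <;> apply ih

theorem stirlingFirst_succ_succ_div_factorial_eq_sum (N k : ℕ) :
    (stirlingFirst (N + 1) (k + 1) : ℝ) / N ! =
      ∑ n ∈ range (N + 1), (stirlingFirst n k : ℝ) / n ! := by
  induction N with
  | zero => simp [stirlingFirst_succ_succ]
  | succ N ih =>
    rw [sum_range_succ, ← ih, stirlingFirst_succ_succ, factorial_succ]
    push_cast
    field_simp

noncomputable def altBinomMoment (j N : ℕ) : ℝ :=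
  ∑ i ∈ range (N + 1), (-1) ^ i * N.choose i / ((i : ℝ) + 1) ^ j

theorem altBinomMoment_zero (N : ℕ) : altBinomMoment 0 N = if N = 0 then 1 else 0 := by
  have h := congrArg (Int.cast : ℤ → ℝ) (Int.alternating_sum_range_choose (n := N))
  push_cast at h
  simpa [altBinomMoment] using h

theorem altBinomMoment_eq_sum_range {j l M : ℕ} (hl : l ≤ M) :
    altBinomMoment j l = ∑ i ∈ range (M + 1), (-1) ^ i * l.choose i / ((i : ℝ) + 1) ^ j := by
  refine sum_subset (range_subset_range.2 (by omega)) fun i _ hi => ?_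
  rw [choose_eq_zero_of_lt (by simpa using hi)]
  simp

theorem sum_range_choose_eq_succ_choose_succ (N i : ℕ) :
    ∑ l ∈ range (N + 1), l.choose i = (N + 1).choose (i + 1) := by
  induction N with
  | zero => rcases i with _ | i <;> simp [choose_eq_zero_of_lt]
  | succ N ih => rw [sum_range_succ, ih, choose_succ_succ' (N + 1), add_comm]

theorem altBinomMoment_succ (j N : ℕ) :
    altBinomMoment (j + 1) N = (∑ l ∈ range (N + 1), altBinomMoment j l) / (N + 1) := by
  have hswap : ∑ l ∈ range (N + 1), altBinomMoment j l =
      ∑ i ∈ range (N + 1), (-1) ^ i * ((N + 1).choose (i + 1) : ℝ) / ((i : ℝ) + 1) ^ j := by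
    rw [sum_congr rfl fun l hl => altBinomMoment_eq_sum_range (mem_range_succ_iff.1 hl),
      sum_comm]
    refine sum_congr rfl fun i _ => ?_
    rw [← sum_div, ← mul_sum, ← sum_range_choose_eq_succ_choose_succ]
    push_cast
    rfl
  rw [hswap, sum_div, altBinomMoment]
  refine sum_congr rfl fun i _ => ?_
  have hchoose : ((N + 1 : ℕ) : ℝ) * N.choose i = (N + 1).choose (i + 1) * ((i : ℝ) + 1) := by
    exact_mod_cast add_one_mul_choose_eq N i
  push_cast at hchoose
  field_simp
  linear_combination ((i : ℝ) + 1) ^ j * hchoose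

theorem altBinomMoment_one (N : ℕ) : altBinomMoment 1 N = 1 / (N + 1) := by
  rw [altBinomMoment_succ, sum_range_succ', sum_eq_zero fun l _ => by simp [altBinomMoment_zero]]
  simp [altBinomMoment_zero]

theorem altBinomMoment_two (N : ℕ) : altBinomMoment 2 N = H (N + 1) / (N + 1) := by
  rw [altBinomMoment_succ]
  simp [altBinomMoment_one, H]

theorem sum_range_H_succ_div (m : ℕ) :
    ∑ l ∈ range m, H (l + 1) / ((l : ℝ) + 1) = (H m ^ 2 + Hgen 2 m) / 2 := by
  induction m with
  | zero => simp [H, Hgen]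
  | succ m ih =>
    rw [sum_range_succ, ih]
    simp only [H, Hgen, sum_range_succ]
    field_simp
    ring

theorem altBinomMoment_three (N : ℕ) :
    altBinomMoment 3 N = (H (N + 1) ^ 2 + Hgen 2 (N + 1)) / (2 * (N + 1)) := by
  rw [altBinomMoment_succ]
  simp only [altBinomMoment_two, sum_range_H_succ_div]
  field_simp

theorem hasDerivAt_neg_log_one_sub_pow_div (k : ℕ) {t : ℝ} (ht : 1 - t ≠ 0) :
    HasDerivAt (fun t => (-log (1 - t)) ^ (k + 1) / (k + 1)!)
      ((-log (1 - t)) ^ k / k ! / (1 - t)) t := by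
  refine ((((hasDerivAt_id t).const_sub 1).log ht).neg.pow (k + 1)).div_const _ |>.congr_deriv ?_
  simp only [id, Pi.neg_apply, Nat.add_sub_cancel, factorial_succ]
  push_cast
  field_simp

theorem integral_neg_log_one_sub_pow_div (k : ℕ) {x : ℝ} (hx : x < 1) :
    ∫ t in 0..x, (-log (1 - t)) ^ k / k ! / (1 - t) = (-log (1 - x)) ^ (k + 1) / (k + 1)! := by
  have hne : ∀ t ∈ Set.uIcc 0 x, 1 - t ≠ 0 := fun t ht =>
    (sub_pos.2 (ht.2.trans_lt (max_lt zero_lt_one hx))).ne'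
  have hcont : ContinuousOn (fun t => (-log (1 - t)) ^ k / k ! / (1 - t)) (Set.uIcc 0 x) :=
    fun t ht => by
      have := hne t ht
      exact ContinuousAt.continuousWithinAt (by fun_prop (disch := assumption))
  rw [intervalIntegral.integral_eq_sub_of_hasDerivAt
    (fun t ht => hasDerivAt_neg_log_one_sub_pow_div k (hne t ht)) hcont.intervalIntegrable]
  simp

theorem summable_norm_stirlingFirst_mul_pow_div_factorial (k : ℕ) {x : ℝ} (hx : |x| < 1) :
    Summable fun n => ‖(stirlingFirst n k : ℝ) * x ^ n / (n ! : ℝ)‖ := by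
  refine (summable_geometric_of_lt_one (abs_nonneg x) hx).of_nonneg_of_le
    (fun n => norm_nonneg _) fun n => ?_
  simp only [norm_div, norm_mul, norm_pow, Real.norm_eq_abs, Nat.abs_cast]
  rw [mul_div_right_comm]
  refine mul_le_of_le_one_left (by positivity) ?_
  rw [div_le_one (by positivity)]
  exact_mod_cast stirlingFirst_le_factorial n k

theorem hasSum_stirlingFirst_succ_succ_div_factorial_mul_pow (k : ℕ) {x : ℝ} (hx : |x| < 1) :
    HasSum (fun N => (stirlingFirst (N + 1) (k + 1) : ℝ) / N ! * x ^ N)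
      ((∑' n, (stirlingFirst n k : ℝ) * x ^ n / n !) / (1 - x)) := by
  have hgeom : Summable fun n => ‖x ^ n‖ := by
    simpa [norm_pow] using summable_geometric_of_lt_one (abs_nonneg x) hx
  have h := hasSum_sum_range_mul_of_summable_norm
    (summable_norm_stirlingFirst_mul_pow_div_factorial k hx) hgeom
  rw [tsum_geometric_of_abs_lt_one hx, ← div_eq_mul_inv] at h
  refine h.congr_fun fun N => ?_
  rw [stirlingFirst_succ_succ_div_factorial_eq_sum, sum_mul]
  refine sum_congr rfl fun n hn => ?_
  rw [← pow_mul_pow_sub x (mem_range_succ_iff.1 hn)]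
  ring

theorem hasSum_stirlingFirst_mul_pow_div_factorial (k : ℕ) {x : ℝ} (hx : |x| < 1) :
    HasSum (fun n => (stirlingFirst n k : ℝ) * x ^ n / n !) ((-log (1 - x)) ^ k / k !) := by
  induction k generalizing x with
  | zero =>
    simp only [pow_zero, factorial_zero, cast_one, div_one]
    convert hasSum_ite_eq 0 (1 : ℝ) with n
    rcases n with _ | n <;> simp
  | succ k ih =>
    -- Integrate termwise the Cauchy product of the previous series with `∑ tᴺ = 1 / (1 - t)`.
    have hx1 : x < 1 := (le_abs_self x).trans_lt hx
    have habs : ∀ t ∈ uIoc 0 x, |t| ≤ |x| := fun t ht => by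
      simpa using abs_sub_left_of_mem_uIcc (uIoc_subset_uIcc ht)
    have hgeom : ∀ {t : ℝ}, |t| < 1 → HasSum
        (fun N => (stirlingFirst (N + 1) (k + 1) : ℝ) / N ! * t ^ N)
        ((-log (1 - t)) ^ k / k ! / (1 - t)) := fun ht => by
      simpa [(ih ht).tsum_eq] using hasSum_stirlingFirst_succ_succ_div_factorial_mul_pow k ht
    have hint := intervalIntegral.hasSum_integral_of_dominated_convergence (μ := volume)
      (a := 0) (b := x) (F := fun N t => (stirlingFirst (N + 1) (k + 1) : ℝ) / N ! * t ^ N)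
      (fun N _ => (stirlingFirst (N + 1) (k + 1) : ℝ) / N ! * |x| ^ N)
      (fun N => (by fun_prop : Continuous _).aestronglyMeasurable)
      (fun N => ae_of_all _ fun t ht => by
        simp only [norm_mul, norm_pow, Real.norm_eq_abs, abs_of_nonneg (by positivity :
          (0 : ℝ) ≤ (stirlingFirst (N + 1) (k + 1) : ℝ) / N !)]
        exact mul_le_mul_of_nonneg_left (pow_le_pow_left₀ (abs_nonneg t) (habs t ht) N)
          (by positivity))
      (ae_of_all _ fun _ _ => (hgeom (by rwa [abs_abs])).summable)
      intervalIntegrable_const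
      (ae_of_all _ fun t ht => hgeom ((habs t ht).trans_lt hx))
    rw [integral_neg_log_one_sub_pow_div k hx1] at hint
    refine (hasSum_nat_add_iff' 1).1 ?_
    simp only [range_one, sum_singleton, stirlingFirst_zero_succ, cast_zero, zero_mul, zero_div,
      sub_zero]
    convert hint using 2 with N
    rw [intervalIntegral.integral_const_mul, integral_pow, zero_pow N.succ_ne_zero, sub_zero,
      factorial_succ]
    push_cast
    field_simp

theorem MeasureTheory.integrable_of_hasSum_of_summable_integral_norm {α E ι : Type*}
    [MeasurableSpace α] {μ : Measure α} [NormedAddCommGroup E] [Countable ι]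
    {F : ι → α → E} {f : α → E} (hF_int : ∀ i, Integrable (F i) μ)
    (hF_sum : Summable fun i => ∫ a, ‖F i a‖ ∂μ) (h_lim : ∀ᵐ a ∂μ, HasSum (F · a) (f a)) :
    Integrable f μ := by
  refine ⟨aestronglyMeasurable_of_tendsto_ae Filter.atTop
    (fun s => Finset.aestronglyMeasurable_fun_sum s fun i _ => (hF_int i).1) h_lim, ?_⟩
  calc ∫⁻ a, ‖f a‖ₑ ∂μ ≤ ∫⁻ a, ∑' i, ‖F i a‖ₑ ∂μ :=
        lintegral_mono_ae (h_lim.mono fun a ha => ha.tsum_eq ▸ enorm_tsum_le_tsum_enorm)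
    _ = ENNReal.ofReal (∑' i, ∫ a, ‖F i a‖ ∂μ) := by
        rw [lintegral_tsum fun i => (hF_int i).1.enorm, ENNReal.ofReal_tsum_of_nonneg
          (fun i => integral_nonneg fun a => norm_nonneg _) hF_sum]
        simp_rw [ofReal_integral_norm_eq_lintegral_enorm (hF_int _)]
    _ < ⊤ := ENNReal.ofReal_lt_top

theorem integrableOn_pow_mul_exp_neg_mul (m : ℕ) {c : ℝ} (hc : 0 < c) :
    IntegrableOn (fun v => v ^ m * exp (-(c * v))) (Ioi 0) := by
  refine (integrableOn_rpow_mul_exp_neg_mul_rpow (s := m) (p := 1)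
    (by linarith [Nat.cast_nonneg (α := ℝ) m])
    zero_lt_one hc).congr_fun (fun v _ => ?_) measurableSet_Ioi
  simp [Real.rpow_natCast]

theorem integral_pow_mul_exp_neg_mul (m : ℕ) {c : ℝ} (hc : 0 < c) :
    ∫ v in Ioi 0, v ^ m * exp (-(c * v)) = m ! / c ^ (m + 1) := by
  have h := integral_rpow_mul_exp_neg_mul_Ioi (a := m + 1) (by positivity) hc
  rw [add_sub_cancel_right, Real.Gamma_nat_eq_factorial, ← Nat.cast_succ, Real.rpow_natCast]
    at h
  simp_rw [Real.rpow_natCast] at h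
  rw [h, one_div_pow, one_div_mul_eq_div]

theorem exp_neg_lt_one {v : ℝ} (hv : 0 < v) : exp (-v) < 1 :=
  exp_lt_one_iff.2 (neg_lt_zero.2 hv)

theorem exp_neg_mul_one_sub_exp_neg_pow (N : ℕ) (v : ℝ) :
    exp (-v) * (1 - exp (-v)) ^ N =
      ∑ i ∈ range (N + 1), (-1) ^ i * N.choose i * exp (-((i + 1) * v)) := by
  rw [sub_eq_neg_add, add_pow, mul_sum]
  refine sum_congr rfl fun i _ => ?_
  rw [neg_pow, ← Real.exp_nat_mul, one_pow, show -((i + 1) * v) = -v + i * -v by ring,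
    Real.exp_add]
  ring

theorem integral_pow_mul_exp_neg_mul_one_sub_exp_neg_pow (m N : ℕ) :
    ∫ v in Ioi 0, v ^ m * (exp (-v) * (1 - exp (-v)) ^ N) = m ! * altBinomMoment (m + 1) N := by
  have hint : ∀ i : ℕ, IntegrableOn (fun v => v ^ m * exp (-((i + 1) * v))) (Ioi 0) :=
    fun i => integrableOn_pow_mul_exp_neg_mul m (by positivity)
  simp_rw [exp_neg_mul_one_sub_exp_neg_pow, mul_sum]
  rw [integral_finsetSum _ fun i _ => ((hint i).const_mul ((-1) ^ i * N.choose i)).congr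
    (ae_of_all _ fun v => by ring), altBinomMoment, mul_sum]
  refine sum_congr rfl fun i _ => ?_
  calc ∫ v in Ioi 0, v ^ m * ((-1) ^ i * N.choose i * exp (-((i + 1) * v)))
      = ∫ v in Ioi 0, (-1) ^ i * N.choose i * (v ^ m * exp (-((i + 1) * v))) := by
        congr 1 with v
        ring
    _ = m ! * ((-1) ^ i * N.choose i / ((i : ℝ) + 1) ^ (m + 1)) := by
        rw [integral_const_mul, integral_pow_mul_exp_neg_mul m (by positivity)]
        ring

theorem hasSum_pow_mul_exp_neg_succ_mul (m : ℕ) {v : ℝ} (hv : 0 < v) :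
    HasSum (fun j : ℕ => v ^ m * exp (-((j + 1) * v))) (v ^ m * exp (-v) / (1 - exp (-v))) := by
  have hq : exp (-v) < 1 := exp_neg_lt_one hv
  have h := (hasSum_geometric_of_lt_one (exp_pos _).le hq).mul_left (v ^ m * exp (-v))
  rw [← div_eq_mul_inv] at h
  refine h.congr_fun fun j => ?_
  rw [← Real.exp_nat_mul, mul_assoc, ← Real.exp_add]
  ring_nf

theorem integral_norm_pow_mul_exp_neg_succ_mul (m j : ℕ) :
    ∫ v in Ioi 0, ‖v ^ m * exp (-((j + 1) * v))‖ = m ! * (1 / ((j : ℝ) + 1) ^ (m + 1)) := by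
  rw [mul_one_div, ← integral_pow_mul_exp_neg_mul m (by positivity)]
  exact setIntegral_congr_fun measurableSet_Ioi fun v hv =>
    Real.norm_of_nonneg (by have : 0 < v := hv; positivity)

theorem summable_one_div_nat_add_one_pow {p : ℕ} (hp : 1 < p) :
    Summable fun j : ℕ => 1 / ((j : ℝ) + 1) ^ p := by
  simpa using (summable_nat_add_iff 1).2 (Real.summable_one_div_nat_pow.2 hp)

theorem integrableOn_pow_mul_exp_neg_div_one_sub_exp_neg {m : ℕ} (hm : m ≠ 0) :
    IntegrableOn (fun v => v ^ m * exp (-v) / (1 - exp (-v))) (Ioi 0) := by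
  refine integrable_of_hasSum_of_summable_integral_norm
    (fun j : ℕ => integrableOn_pow_mul_exp_neg_mul m (by positivity : (0 : ℝ) < j + 1)) ?_
    ((ae_restrict_iff' measurableSet_Ioi).2 (ae_of_all _ fun v hv =>
      hasSum_pow_mul_exp_neg_succ_mul m hv))
  simp_rw [integral_norm_pow_mul_exp_neg_succ_mul]
  exact (summable_one_div_nat_add_one_pow (by omega)).mul_left _

theorem integral_pow_mul_exp_neg_div_one_sub_exp_neg {m : ℕ} (hm : m ≠ 0) :
    ∫ v in Ioi 0, v ^ m * exp (-v) / (1 - exp (-v)) =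
      m ! * ∑' j : ℕ, 1 / ((j : ℝ) + 1) ^ (m + 1) := by
  have h := hasSum_integral_of_summable_integral_norm
    (fun j : ℕ => integrableOn_pow_mul_exp_neg_mul m (by positivity : (0 : ℝ) < j + 1))
    (by simp_rw [integral_norm_pow_mul_exp_neg_succ_mul]
        exact (summable_one_div_nat_add_one_pow (by omega)).mul_left _)
  rw [setIntegral_congr_fun measurableSet_Ioi fun v hv =>
    (hasSum_pow_mul_exp_neg_succ_mul m hv).tsum_eq.symm, ← h.tsum_eq, ← tsum_mul_left]
  congr with j
  rw [integral_pow_mul_exp_neg_mul m (by positivity), mul_one_div]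

theorem riemannZeta_natCast_eq_tsum {p : ℕ} (hp : 1 < p) :
    riemannZeta p = ((∑' j : ℕ, 1 / ((j : ℝ) + 1) ^ p : ℝ) : ℂ) := by
  rw [zeta_eq_tsum_one_div_nat_add_one_cpow (by simpa using hp), Complex.ofReal_tsum]
  push_cast
  simp_rw [Complex.cpow_natCast]

theorem integral_sq_mul_exp_neg_mul_one_sub_exp_neg_pow (N : ℕ) :
    ∫ v in Ioi 0, v ^ 2 * (exp (-v) * (1 - exp (-v)) ^ N) =
      (H (N + 1) ^ 2 + Hgen 2 (N + 1)) / (N + 1) := by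
  rw [integral_pow_mul_exp_neg_mul_one_sub_exp_neg_pow, altBinomMoment_three,
    show ((2 ! : ℕ) : ℝ) = 2 by norm_num [factorial]]
  field_simp

theorem hasSum_stirlingFirst_mul_one_sub_exp_neg_pow (k : ℕ) {v : ℝ} (hv : 0 < v) :
    HasSum (fun m => (stirlingFirst m k : ℝ) * (1 - exp (-v)) ^ m / m !) (v ^ k / k !) := by
  have hx : |1 - exp (-v)| < 1 := by
    rw [abs_lt]
    constructor <;> linarith [exp_pos (-v), exp_neg_lt_one hv]
  simpa using hasSum_stirlingFirst_mul_pow_div_factorial k hx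

theorem integral_stirlingFirst_mul_one_sub_exp_neg_pow {k : ℕ} (hk : k ≠ 0) (m : ℕ) :
    ∫ v in Ioi 0, (stirlingFirst m k : ℝ) * (1 - exp (-v)) ^ m / m ! *
        (v ^ 2 * exp (-v) / (1 - exp (-v))) =
      stirlingFirst m k * (H m ^ 2 + Hgen 2 m) / (m ! * m) := by
  rcases m with _ | N
  · simp [stirlingFirst_eq_zero_of_lt (Nat.pos_of_ne_zero hk)]
  have hcongr : ∀ v ∈ Ioi (0 : ℝ), (stirlingFirst (N + 1) k : ℝ) * (1 - exp (-v)) ^ (N + 1) /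
      (N + 1)! * (v ^ 2 * exp (-v) / (1 - exp (-v))) =
      (stirlingFirst (N + 1) k : ℝ) / (N + 1)! * (v ^ 2 * (exp (-v) * (1 - exp (-v)) ^ N)) :=
    fun v hv => by
      have : 1 - exp (-v) ≠ 0 := (sub_pos.2 (exp_neg_lt_one hv)).ne'
      field_simp
      ring
  rw [setIntegral_congr_fun measurableSet_Ioi hcongr, integral_const_mul,
    integral_sq_mul_exp_neg_mul_one_sub_exp_neg_pow]
  push_cast
  field_simp

theorem hasSum_stirlingFirst_mul_harmonic {k : ℕ} (hk : k ≠ 0) :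
    HasSum (fun m => (stirlingFirst m k : ℝ) * (H m ^ 2 + Hgen 2 m) / (m ! * m))
      ((k + 1) * (k + 2) * ∑' j : ℕ, 1 / ((j : ℝ) + 1) ^ (k + 3)) := by
  set F : ℕ → ℝ → ℝ := fun m v => (stirlingFirst m k : ℝ) * (1 - exp (-v)) ^ m / m ! *
    (v ^ 2 * exp (-v) / (1 - exp (-v)))
  set f : ℝ → ℝ := fun v => v ^ k / k ! * (v ^ 2 * exp (-v) / (1 - exp (-v)))
  have hf : f = fun v => v ^ (k + 2) * exp (-v) / (1 - exp (-v)) / k ! := by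
    ext v
    ring
  have hlim : ∀ v ∈ Ioi (0 : ℝ), HasSum (F · v) (f v) := fun v hv =>
    (hasSum_stirlingFirst_mul_one_sub_exp_neg_pow k hv).mul_right _
  have hF_nonneg : ∀ m, ∀ v ∈ Ioi (0 : ℝ), 0 ≤ F m v := fun m v hv => by
    have : 0 ≤ 1 - exp (-v) := (sub_pos.2 (exp_neg_lt_one hv)).le
    have : 0 < v := hv
    positivity
  -- Dominated convergence, with the nonnegative terms themselves as the bound.
  have hint := hasSum_integral_of_dominated_convergence (μ := volume.restrict (Ioi 0)) F
    (fun m => (by fun_prop : Measurable (F m)).aestronglyMeasurable)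
    (fun m => (ae_restrict_iff' measurableSet_Ioi).2 (ae_of_all _ fun v hv =>
      (Real.norm_of_nonneg (hF_nonneg m v hv)).le))
    ((ae_restrict_iff' measurableSet_Ioi).2 (ae_of_all _ fun v hv => (hlim v hv).summable))
    ((hf ▸ (integrableOn_pow_mul_exp_neg_div_one_sub_exp_neg (by omega)).div_const _).congr
      ((ae_restrict_iff' measurableSet_Ioi).2 (ae_of_all _ fun v hv => (hlim v hv).tsum_eq.symm)))
    ((ae_restrict_iff' measurableSet_Ioi).2 (ae_of_all _ hlim))
  rw [hf, integral_div, integral_pow_mul_exp_neg_div_one_sub_exp_neg (by omega)] at hint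
  have hval : ((k + 2)! * ∑' j : ℕ, 1 / ((j : ℝ) + 1) ^ (k + 2 + 1)) / k ! =
      (k + 1) * (k + 2) * ∑' j : ℕ, 1 / ((j : ℝ) + 1) ^ (k + 3) := by
    rw [factorial_succ, factorial_succ]
    push_cast
    field_simp
    ring
  rw [hval] at hint
  exact hint.congr_fun fun m => (integral_stirlingFirst_mul_one_sub_exp_neg_pow hk m).symm

theorem neg_one_pow_mul_stirlingS1_add (n k : ℕ) :
    (-1) ^ n * stirlingS1 (n + k) k = stirlingFirst (n + k) k := by
  rw [stirlingS1_eq_neg_one_pow_mul_stirlingFirst, ← mul_assoc, ← pow_add,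
    show n + (n + k + k) = 2 * (n + k) by ring, pow_mul]
  simp

theorem zeta_eq_stirling_harmonic_sq_series (k : ℕ) (hk : 1 ≤ k) :
    riemannZeta ((k : ℂ) + 3) =
      ((1 / (((k : ℝ) + 1) * ((k : ℝ) + 2)) *
        ∑' n : ℕ, (-1) ^ n * stirlingS1 (n + k) k * (H (n + k) ^ 2 + Hgen 2 (n + k)) /
          ((Nat.factorial (n + k)) * (n + k)) : ℝ) : ℂ) := by
  have hsum := hasSum_stirlingFirst_mul_harmonic (k := k) (by omega)
  have hhead : ∑ m ∈ range k, (stirlingFirst m k : ℝ) * (H m ^ 2 + Hgen 2 m) / (m ! * m) = 0 :=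
    sum_eq_zero fun m hm => by simp [stirlingFirst_eq_zero_of_lt (mem_range.1 hm)]
  have hshift := (hasSum_nat_add_iff' k).2 hsum
  rw [hhead, sub_zero] at hshift
  have hseries : ∑' n : ℕ, (-1) ^ n * stirlingS1 (n + k) k * (H (n + k) ^ 2 + Hgen 2 (n + k)) /
      ((Nat.factorial (n + k)) * (n + k)) =
      (k + 1) * (k + 2) * ∑' j : ℕ, 1 / ((j : ℝ) + 1) ^ (k + 3) := by
    rw [← hshift.tsum_eq]
    congr with n
    rw [neg_one_pow_mul_stirlingS1_add]
    push_cast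
    rfl
  rw [hseries, ← mul_assoc, one_div_mul_cancel (by positivity), one_mul,
    ← riemannZeta_natCast_eq_tsum (by omega)]
  push_cast
  rfl
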